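/- For every integer s ≥ 2 and every real z with −(s+4)(s−1)/3 ≤ z ≤ 0, one has −1 ≤ 1 + w_1·z ≤ 1 and hence |R_s(z)| ≤ 1. In particular, the real stability interval of the s-stage RKG2 method has length (s+4)(s−1)/3, which grows quadratically in s. -/

import Mathlib

/-- The Gegenbauer polynomials with parameter 3/2:
`C_0(x) = 1`, `C_1(x) = 3x`, and
`C_j(x) = ((2j+1)/j)·x·C_{j-1}(x) − ((j+1)/j)·C_{j-2}(x)` for `j ≥ 2`. -/
noncomputable def gegenbauer : ℕ → ℝ → ℝ
  | 0, _ => 1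
  | 1, x => 3 * x
  | (j + 2), x =>
      (2 * ((j : ℝ) + 2) + 1) / ((j : ℝ) + 2) * x * gegenbauer (j + 1) x
        - (((j : ℝ) + 2) + 1) / ((j : ℝ) + 2) * gegenbauer j x

/-- The RKG2 coefficient `b_j = 4(j−1)(j+4)/(3j(j+1)(j+2)(j+3))`. -/
noncomputable def rkg2B (j : ℕ) : ℝ :=
  4 * ((j : ℝ) - 1) * ((j : ℝ) + 4) /
    (3 * (j : ℝ) * ((j : ℝ) + 1) * ((j : ℝ) + 2) * ((j : ℝ) + 3))

/-- The RKG2 coefficient `a_j = 1 − ((j+1)(j+2)/2)·b_j`. -/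
noncomputable def rkg2A (j : ℕ) : ℝ :=
  1 - ((j : ℝ) + 1) * ((j : ℝ) + 2) / 2 * rkg2B j

/-- The RKG2 parameter `w_1 = 6/((s+4)(s−1))`. -/
noncomputable def rkg2W (s : ℕ) : ℝ := 6 / (((s : ℝ) + 4) * ((s : ℝ) - 1))

/-- The RKG2 stability polynomial `R_j(z) = a_j + b_j·C_j(1 + w_1·z)` where `w_1` is built from
the stage number `s`. -/
noncomputable def rkg2R (s j : ℕ) (z : ℝ) : ℝ :=
  rkg2A j + rkg2B j * gegenbauer j (1 + rkg2W s * z)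

/-!
On `[-1, 1]` the Gegenbauer polynomial `C_n` is dominated by its value at `1`: writing
`x = cos θ`, `C_n(cos θ) = ∑_{k+l=n} w_k w_l cos((l - k)θ)` with positive weights
`w_k = (3/2)_k / k!`, the coefficients of `(1 - t)^{-3/2}`, and at `θ = 0` every cosine is `1`.
Since `a_s, b_s ≥ 0` and `a_s + b_s C_s(1) = 1`, it follows that `|R_s(z)| ≤ 1` as soon as the
argument `1 + w_1 z` lies in `[-1, 1]`, and `w_1` is chosen so that this happens exactly on
`[-(s+4)(s-1)/3, 0]`.
-/

open Finset Real

noncomputable def gegenbauerWeight : ℕ → ℝ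
  | 0 => 1
  | k + 1 => gegenbauerWeight k * (2 * k + 3) / (2 * k + 2)

lemma gegenbauerWeight_pos (k : ℕ) : 0 < gegenbauerWeight k := by
  induction k with
  | zero => simp [gegenbauerWeight]
  | succ k ih => rw [gegenbauerWeight]; positivity

lemma gegenbauerWeight_add_two (n : ℕ) :
    gegenbauerWeight (n + 2) = (2 * n + 5) / (n + 2) / 2 * gegenbauerWeight (n + 1) := by
  have : (n : ℝ) + 2 ≠ 0 := by positivity
  rw [gegenbauerWeight]
  push_cast
  field_simp
  ring

lemma gegenbauerWeight_succ_mul_succ {n k l : ℕ} (h : k + l = n) :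
    gegenbauerWeight (k + 1) * gegenbauerWeight (l + 1) =
      (2 * n + 5) / (n + 2) / 2 * (gegenbauerWeight (k + 1) * gegenbauerWeight l
          + gegenbauerWeight k * gegenbauerWeight (l + 1))
        - (n + 3) / (n + 2) * (gegenbauerWeight k * gegenbauerWeight l) := by
  subst h
  simp only [gegenbauerWeight]
  push_cast
  field_simp
  ring

noncomputable def gegenbauerCosSum (n : ℕ) (θ : ℝ) : ℝ :=
  ∑ p ∈ antidiagonal n,
    gegenbauerWeight p.1 * gegenbauerWeight p.2 * cos (((p.2 : ℝ) - p.1) * θ)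

lemma gegenbauerCosSum_add_two (n : ℕ) (θ : ℝ) :
    gegenbauerCosSum (n + 2) θ =
      (2 * n + 5) / (n + 2) * cos θ * gegenbauerCosSum (n + 1) θ
        - (n + 3) / (n + 2) * gegenbauerCosSum n θ := by
  set w := gegenbauerWeight
  set T : ℕ → ℕ → ℝ := fun k l => cos (((l : ℝ) - k) * θ) with hT
  have hT_succ (k l : ℕ) : T (k + 1) (l + 1) = T k l := by
    simp only [hT]; push_cast; ring_nf
  have hT_cos (k l : ℕ) : 2 * cos θ * T k l = T k (l + 1) + T (k + 1) l := by
    simp only [hT]; push_cast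
    rw [show ((l : ℝ) + 1 - k) * θ = (l - k) * θ + θ by ring,
      show ((l : ℝ) - (k + 1)) * θ = (l - k) * θ - θ by ring, cos_add, cos_sub]
    ring
  have hS (m : ℕ) : gegenbauerCosSum m θ = ∑ p ∈ antidiagonal m, w p.1 * w p.2 * T p.1 p.2 := rfl
  have h₂ : gegenbauerCosSum (n + 2) θ = w 0 * w (n + 2) * T 0 (n + 2)
      + w (n + 2) * w 0 * T (n + 2) 0
      + ∑ p ∈ antidiagonal n, w (p.1 + 1) * w (p.2 + 1) * T p.1 p.2 := by
    rw [hS, Nat.sum_antidiagonal_succ, Nat.sum_antidiagonal_succ']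
    simp only [hT_succ]
    ring
  have h₁ : 2 * cos θ * gegenbauerCosSum (n + 1) θ = w 0 * w (n + 1) * T 0 (n + 2)
      + w (n + 1) * w 0 * T (n + 2) 0
      + ∑ p ∈ antidiagonal n, (w (p.1 + 1) * w p.2 + w p.1 * w (p.2 + 1)) * T p.1 p.2 := by
    rw [hS, mul_sum]
    simp only [mul_left_comm (2 * cos θ), hT_cos, mul_add, sum_add_distrib]
    rw [Nat.sum_antidiagonal_succ (f := fun p => w p.1 * w p.2 * T p.1 (p.2 + 1)),
      Nat.sum_antidiagonal_succ' (f := fun p => w p.1 * w p.2 * T (p.1 + 1) p.2)]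
    simp only [hT_succ, add_mul, sum_add_distrib]
    ring
  have hsum : ∑ p ∈ antidiagonal n, w (p.1 + 1) * w (p.2 + 1) * T p.1 p.2
      = (2 * n + 5) / (n + 2) / 2
          * ∑ p ∈ antidiagonal n, (w (p.1 + 1) * w p.2 + w p.1 * w (p.2 + 1)) * T p.1 p.2
        - (n + 3) / (n + 2) * ∑ p ∈ antidiagonal n, w p.1 * w p.2 * T p.1 p.2 := by
    rw [mul_sum, mul_sum, ← sum_sub_distrib]
    refine sum_congr rfl fun p hp => ?_
    rw [gegenbauerWeight_succ_mul_succ (mem_antidiagonal.1 hp)]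
    ring
  linear_combination h₂ - (2 * n + 5) / (n + 2) / 2 * h₁ + hsum + (n + 3) / (n + 2) * hS n
    + (w 0 * T 0 (n + 2) + w 0 * T (n + 2) 0) * gegenbauerWeight_add_two n

theorem gegenbauer_cos (n : ℕ) (θ : ℝ) : gegenbauer n (cos θ) = gegenbauerCosSum n θ := by
  induction n using Nat.twoStepInduction with
  | zero => simp [gegenbauer, gegenbauerCosSum, gegenbauerWeight]
  | one =>
    rw [gegenbauerCosSum, Nat.sum_antidiagonal_succ]
    simp [gegenbauer, gegenbauerWeight]
    ring
  | more n ih₀ ih₁ =>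
    rw [gegenbauer, ih₀, ih₁, gegenbauerCosSum_add_two]
    ring_nf

theorem gegenbauer_one (n : ℕ) : gegenbauer n 1 = (n + 1) * (n + 2) / 2 := by
  induction n using Nat.twoStepInduction with
  | zero => norm_num [gegenbauer]
  | one => norm_num [gegenbauer]
  | more n ih₀ ih₁ =>
    have : (n : ℝ) + 2 ≠ 0 := by positivity
    rw [gegenbauer, ih₀, ih₁]
    push_cast
    field_simp
    ring

theorem abs_gegenbauer_le {x : ℝ} (hx : x ∈ Set.Icc (-1) 1) (n : ℕ) :
    |gegenbauer n x| ≤ gegenbauer n 1 := by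
  obtain ⟨θ, rfl⟩ : ∃ θ, cos θ = x := ⟨arccos x, cos_arccos hx.1 hx.2⟩
  rw [← cos_zero, gegenbauer_cos, gegenbauer_cos, gegenbauerCosSum, gegenbauerCosSum]
  refine (abs_sum_le_sum_abs _ _).trans (sum_le_sum fun p _ => ?_)
  have hw := mul_pos (gegenbauerWeight_pos p.1) (gegenbauerWeight_pos p.2)
  rw [abs_mul, abs_of_pos hw, mul_zero, cos_zero, mul_one]
  exact mul_le_of_le_one_right hw.le (abs_cos_le_one _)

lemma rkg2B_nonneg (j : ℕ) : 0 ≤ rkg2B j := by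
  rcases j with _ | j
  · simp [rkg2B] -- `rkg2B 0 = 0`: the denominator vanishes
  · unfold rkg2B
    push_cast
    rw [add_sub_cancel_right]
    positivity

lemma rkg2A_nonneg (j : ℕ) : 0 ≤ rkg2A j := by
  rcases j with _ | j
  · simp [rkg2A, rkg2B]
  · have hb : ((j + 1 : ℕ) + 1 : ℝ) * ((j + 1 : ℕ) + 2) / 2 * rkg2B (j + 1)
        = 2 * j * (j + 5) / (3 * (j + 1) * (j + 4)) := by
      unfold rkg2B
      push_cast
      field_simp
      ring
    rw [rkg2A, sub_nonneg, hb, div_le_one (by positivity)]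
    nlinarith

theorem abs_rkg2A_add_rkg2B_mul_gegenbauer_le_one {x : ℝ} (hx : x ∈ Set.Icc (-1) 1) (j : ℕ) :
    |rkg2A j + rkg2B j * gegenbauer j x| ≤ 1 :=
  calc |rkg2A j + rkg2B j * gegenbauer j x|
      ≤ |rkg2A j| + |rkg2B j * gegenbauer j x| := abs_add_le _ _
    _ = rkg2A j + rkg2B j * |gegenbauer j x| := by
        rw [abs_mul, abs_of_nonneg (rkg2A_nonneg j), abs_of_nonneg (rkg2B_nonneg j)]
    _ ≤ rkg2A j + rkg2B j * gegenbauer j 1 := by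
        gcongr
        · exact rkg2B_nonneg j
        · exact abs_gegenbauer_le hx j
    _ = 1 := by rw [rkg2A, gegenbauer_one]; ring

lemma one_add_div_mul_mem_Icc {D z : ℝ} (h₁ : -(D / 3) ≤ z) (h₂ : z ≤ 0) :
    1 + 6 / D * z ∈ Set.Icc (-1) 1 := by
  rcases (show 0 ≤ D by linarith).eq_or_lt with rfl | hD
  · simp
  · have hz : -2 ≤ 6 / D * z := by
      rw [div_mul_eq_mul_div, le_div_iff₀ hD]
      linarith
    have : 6 / D * z ≤ 0 := mul_nonpos_of_nonneg_of_nonpos (by positivity) h₂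
    constructor <;> linarith

theorem rkg2_real_stability_interval_general (s : ℕ) (z : ℝ)
    (h₁ : -(((s : ℝ) + 4) * ((s : ℝ) - 1) / 3) ≤ z) (h₂ : z ≤ 0) :
    (-1 ≤ 1 + rkg2W s * z ∧ 1 + rkg2W s * z ≤ 1) ∧ |rkg2R s s z| ≤ 1 := by
  have hx : 1 + rkg2W s * z ∈ Set.Icc (-1) 1 := one_add_div_mul_mem_Icc h₁ h₂
  exact ⟨hx, abs_rkg2A_add_rkg2B_mul_gegenbauer_le_one hx s⟩

/-- For every integer `s ≥ 2` and every real `z` with `−(s+4)(s−1)/3 ≤ z ≤ 0`, one has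
`−1 ≤ 1 + w_1·z ≤ 1` and hence `|R_s(z)| ≤ 1`: the real stability interval of the `s`-stage
RKG2 method contains `[−(s+4)(s−1)/3, 0]`, whose length grows quadratically in `s`. -/
theorem rkg2_real_stability_interval (s : ℕ) (hs : 2 ≤ s) (z : ℝ)
    (h₁ : -(((s : ℝ) + 4) * ((s : ℝ) - 1) / 3) ≤ z) (h₂ : z ≤ 0) :
    (-1 ≤ 1 + rkg2W s * z ∧ 1 + rkg2W s * z ≤ 1) ∧ |rkg2R s s z| ≤ 1 :=
  rkg2_real_stability_interval_general s z h₁ h₂
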